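/- Let d ∈ ℕ, α > 0, K > 0, and for k = 1, 2 let L_k : ℝ^d → ℝ satisfy Assumption 1 and be bounded above with supremum L̄_k := sup L_k. Then there exists a constant c₀ > 0, depending only on α, K, and the constants M_{L_k}, C_{L_k}, L̄_k, L̲_k of L₁ and L₂, such that for all Borel probability measures μ, μ̂ on ℝ^d with ∫ |θ|⁴ dμ ≤ K and ∫ |θ|⁴ dμ̂ ≤ K, and for k = 1, 2: |m_{L_k}^α[μ] − m_{L_k}^α[μ̂]| ≤ c₀ W₂(μ, μ̂). -/

import Mathlib

open MeasureTheory Real Set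

/-- The consensus point `m_L^α[ρ] = (∫ θ e^{-αL(θ)} dρ) / (∫ e^{-αL(θ)} dρ)`. -/
noncomputable def consensusPoint {d : ℕ} (α : ℝ) (L : EuclideanSpace ℝ (Fin d) → ℝ)
    (ρ : Measure (EuclideanSpace ℝ (Fin d))) : EuclideanSpace ℝ (Fin d) :=
  (∫ θ, Real.exp (-α * L θ) ∂ρ)⁻¹ • ∫ θ, Real.exp (-α * L θ) • θ ∂ρ

/-- The 2-Wasserstein distance between two Borel probability measures on `ℝ^d`:
the infimum over couplings `π` of `(∬ |θ - θ̂|² dπ)^{1/2}`. -/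
noncomputable def W2 {d : ℕ} (μ ν : Measure (EuclideanSpace ℝ (Fin d))) : ℝ :=
  sInf {c : ℝ | ∃ pl : Measure (EuclideanSpace ℝ (Fin d) × EuclideanSpace ℝ (Fin d)),
    IsProbabilityMeasure pl ∧ pl.map Prod.fst = μ ∧ pl.map Prod.snd = ν ∧
    c = (∫ p, ‖p.1 - p.2‖ ^ 2 ∂pl) ^ (1/2 : ℝ)}

/-- Assumption 1 of the paper for a loss function `L` with constants
`M_L, C_L, M_{∇L}, C_{∇L}`. -/
structure Assumption1 {d : ℕ} (L : EuclideanSpace ℝ (Fin d) → ℝ)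
    (ML CL MgL CgL : ℝ) : Prop where
  ML_pos : 0 < ML
  CL_pos : 0 < CL
  MgL_pos : 0 < MgL
  CgL_pos : 0 < CgL
  bddBelow : BddBelow (Set.range L)
  differentiable : Differentiable ℝ L
  locLip : ∀ θ θ' : EuclideanSpace ℝ (Fin d),
    |L θ - L θ'| ≤ ML * (‖θ‖ + ‖θ'‖) * ‖θ - θ'‖
  quadGrowth : ∀ θ : EuclideanSpace ℝ (Fin d),
    L θ - sInf (Set.range L) ≤ CL * (1 + ‖θ‖ ^ 2)
  gradLip : ∀ θ θ' : EuclideanSpace ℝ (Fin d),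
    ‖gradient L θ - gradient L θ'‖ ≤ MgL * ‖θ - θ'‖
  gradBdd : ∀ θ : EuclideanSpace ℝ (Fin d), ‖gradient L θ‖ ≤ CgL

/-!
Write `m_L^α[μ] = P / A` with `A = ∫ w dμ`, `P = ∫ w(θ) θ dμ` and `w = exp (-α L)`. Since `L` is
bounded, `w` lies between two positive constants, so `A, Â ≥ a > 0` and
`|m[μ] - m[μ̂]| ≤ a⁻¹ |P - P̂| + a⁻² |P̂| |A - Â|`. Both `w` and `θ ↦ w(θ) θ` satisfy
`|F θ - F θ̂| ≤ C (1 + |θ|² + |θ̂|²) |θ - θ̂|`, so for any coupling `γ` of `μ` and `μ̂`,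
Cauchy–Schwarz bounds `|∫ F dμ - ∫ F dμ̂|` by `C (∫ (1 + |θ|² + |θ̂|²)² dγ)^{1/2}` times
`(∫ |θ - θ̂|² dγ)^{1/2}`, and the first factor is controlled by the fourth moments.
Taking the infimum over couplings gives the `W₂` bound.
-/

theorem abs_exp_sub_exp_le_of_le {x y c : ℝ} (hx : x ≤ c) (hy : y ≤ c) :
    |exp x - exp y| ≤ exp c * |x - y| := by
  simpa only [Real.norm_eq_abs, abs_of_pos (exp_pos _)] using
    (convex_Iic c).norm_image_sub_le_of_norm_hasDerivWithin_le
      (fun z _ => (hasDerivAt_exp z).hasDerivWithinAt)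
      (fun z hz => by simpa [abs_of_pos (exp_pos z)] using exp_le_exp.2 hz) hy hx

section NormedSpace

variable {E : Type*} [NormedAddCommGroup E]

theorem abs_exp_neg_mul_sub_exp_neg_mul_le {α m ML : ℝ} {L : E → ℝ} (hα : 0 ≤ α)
    (hm : ∀ θ, m ≤ L θ) (hL : ∀ θ θ', |L θ - L θ'| ≤ ML * (‖θ‖ + ‖θ'‖) * ‖θ - θ'‖)
    (x y : E) :
    |exp (-α * L x) - exp (-α * L y)| ≤ α * exp (-α * m) * ML * (‖x‖ + ‖y‖) * ‖x - y‖ := by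
  have hle : ∀ θ, -α * L θ ≤ -α * m := fun θ => by nlinarith [hm θ]
  calc |exp (-α * L x) - exp (-α * L y)| ≤ exp (-α * m) * |-α * L x - -α * L y| :=
        abs_exp_sub_exp_le_of_le (hle x) (hle y)
    _ = exp (-α * m) * (α * |L x - L y|) := by
        rw [← mul_sub, abs_mul, abs_neg, abs_of_nonneg hα]
    _ ≤ exp (-α * m) * (α * (ML * (‖x‖ + ‖y‖) * ‖x - y‖)) := by gcongr; exact hL x y
    _ = _ := by ring

theorem add_le_one_add_sq_add_sq (a b : ℝ) : a + b ≤ 1 + a ^ 2 + b ^ 2 := by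
  nlinarith [sq_nonneg (a - 1), sq_nonneg (b - 1)]

variable [NormedSpace ℝ E]

theorem norm_smul_sub_smul_le {s t b C : ℝ} {x y : E} (hs : |s| ≤ b) (hC : 0 ≤ C)
    (hst : |s - t| ≤ C * (‖x‖ + ‖y‖) * ‖x - y‖) :
    ‖s • x - t • y‖ ≤ (b + 2 * C) * (1 + ‖x‖ ^ 2 + ‖y‖ ^ 2) * ‖x - y‖ := by
  have hxy := norm_nonneg (x - y)
  have hb : 0 ≤ b := (abs_nonneg s).trans hs
  have hgrowth : (‖x‖ + ‖y‖) * ‖y‖ ≤ 2 * (1 + ‖x‖ ^ 2 + ‖y‖ ^ 2) := by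
    nlinarith [sq_nonneg (‖x‖ - ‖y‖)]
  calc ‖s • x - t • y‖ = ‖s • (x - y) + (s - t) • y‖ := by
        rw [smul_sub, sub_smul, sub_add_sub_cancel]
    _ ≤ |s| * ‖x - y‖ + |s - t| * ‖y‖ := by
        simpa only [norm_smul, Real.norm_eq_abs] using norm_add_le (s • (x - y)) ((s - t) • y)
    _ ≤ b * ‖x - y‖ + C * (‖x‖ + ‖y‖) * ‖x - y‖ * ‖y‖ := by gcongr
    _ = b * ‖x - y‖ + C * ((‖x‖ + ‖y‖) * ‖y‖) * ‖x - y‖ := by ring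
    _ ≤ b * ‖x - y‖ + C * (2 * (1 + ‖x‖ ^ 2 + ‖y‖ ^ 2)) * ‖x - y‖ := by gcongr
    _ ≤ (b + 2 * C) * (1 + ‖x‖ ^ 2 + ‖y‖ ^ 2) * ‖x - y‖ := by
        nlinarith [mul_nonneg hb hxy, mul_nonneg (mul_nonneg hb hxy) (sq_nonneg ‖x‖),
          mul_nonneg (mul_nonneg hb hxy) (sq_nonneg ‖y‖)]

theorem exists_consensusWeight_bounds {α ML : ℝ} {L : E → ℝ} (hα : 0 ≤ α) (hML : 0 ≤ ML)
    (hbddBelow : BddBelow (range L)) (hbddAbove : BddAbove (range L))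
    (hLip : ∀ θ θ', |L θ - L θ'| ≤ ML * (‖θ‖ + ‖θ'‖) * ‖θ - θ'‖) :
    ∃ a > 0, ∃ Cw ≥ 0, ∃ CP > 0, (∀ θ, a ≤ exp (-α * L θ)) ∧
      (∀ x y : E, ‖exp (-α * L x) - exp (-α * L y)‖ ≤
        Cw * (1 + ‖x‖ ^ 2 + ‖y‖ ^ 2) * ‖x - y‖) ∧
      (∀ x y : E, ‖exp (-α * L x) • x - exp (-α * L y) • y‖ ≤
        CP * (1 + ‖x‖ ^ 2 + ‖y‖ ^ 2) * ‖x - y‖) := by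
  have hm : ∀ θ, sInf (range L) ≤ L θ := fun θ => csInf_le hbddBelow (mem_range_self θ)
  obtain ⟨b, hb, hwb⟩ : ∃ b > 0, ∀ θ, |exp (-α * L θ)| ≤ b :=
    ⟨_, exp_pos (-α * sInf (range L)), fun θ => by
      rw [abs_of_pos (exp_pos _)]
      exact exp_le_exp.2 (by nlinarith [hm θ])⟩
  obtain ⟨Cw, hCw, hw⟩ : ∃ Cw ≥ 0, ∀ x y : E,
      |exp (-α * L x) - exp (-α * L y)| ≤ Cw * (‖x‖ + ‖y‖) * ‖x - y‖ :=
    ⟨_, by positivity, abs_exp_neg_mul_sub_exp_neg_mul_le hα hm hLip⟩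
  refine ⟨exp (-α * sSup (range L)), exp_pos _, Cw, hCw, b + 2 * Cw, by positivity,
    fun θ => exp_le_exp.2 (by nlinarith [le_csSup hbddAbove (mem_range_self θ)]),
    fun x y => ?_, fun x y => norm_smul_sub_smul_le (hwb x) hCw (hw x y)⟩
  rw [Real.norm_eq_abs]
  refine (hw x y).trans ?_
  gcongr _ * ?_ * _
  exact add_le_one_add_sq_add_sq _ _

end NormedSpace

section Growth

variable {E G : Type*} [NormedAddCommGroup E] [NormedAddCommGroup G] {F : E → G} {C : ℝ}

theorem norm_le_of_norm_sub_le (hC : 0 ≤ C)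
    (hF : ∀ x y, ‖F x - F y‖ ≤ C * (1 + ‖x‖ ^ 2 + ‖y‖ ^ 2) * ‖x - y‖) (x : E) :
    ‖F x‖ ≤ ‖F 0‖ + 2 * C * (1 + ‖x‖ ^ 4) := by
  have hx := norm_nonneg x
  have hcubic : (1 + ‖x‖ ^ 2) * ‖x‖ ≤ 2 * (1 + ‖x‖ ^ 4) := by
    nlinarith [sq_nonneg (‖x‖ - 1), sq_nonneg (‖x‖ ^ 2 - 1), mul_nonneg hx (sq_nonneg (‖x‖ - 1))]
  calc ‖F x‖ ≤ ‖F 0‖ + ‖F x - F 0‖ := norm_le_insert' _ _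
    _ ≤ ‖F 0‖ + C * ((1 + ‖x‖ ^ 2) * ‖x‖) := by
        have := hF x 0
        simp only [norm_zero, sub_zero] at this
        nlinarith
    _ ≤ ‖F 0‖ + 2 * C * (1 + ‖x‖ ^ 4) := by nlinarith

variable [MeasurableSpace E] {μ : Measure E}

theorem integrable_of_norm_sub_le [BorelSpace E] [SecondCountableTopology E] [IsFiniteMeasure μ]
    (hFc : Continuous F) (hC : 0 ≤ C)
    (hF : ∀ x y, ‖F x - F y‖ ≤ C * (1 + ‖x‖ ^ 2 + ‖y‖ ^ 2) * ‖x - y‖)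
    (h4 : Integrable (fun x => ‖x‖ ^ 4) μ) : Integrable F μ :=
  ((integrable_const _).add (((integrable_const 1).add h4).const_mul (2 * C))).mono'
    hFc.aestronglyMeasurable (.of_forall (norm_le_of_norm_sub_le hC hF))

theorem norm_integral_le_of_norm_sub_le [NormedSpace ℝ G] [IsProbabilityMeasure μ] (hC : 0 ≤ C)
    (hF : ∀ x y, ‖F x - F y‖ ≤ C * (1 + ‖x‖ ^ 2 + ‖y‖ ^ 2) * ‖x - y‖)
    (h4 : Integrable (fun x => ‖x‖ ^ 4) μ) :
    ‖∫ x, F x ∂μ‖ ≤ ‖F 0‖ + 2 * C * (1 + ∫ x, ‖x‖ ^ 4 ∂μ) := by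
  have h1 : Integrable (fun x => 1 + ‖x‖ ^ 4) μ := (integrable_const 1).add h4
  have h2 : Integrable (fun x => 2 * C * (1 + ‖x‖ ^ 4)) μ := h1.const_mul _
  calc ‖∫ x, F x ∂μ‖ ≤ ∫ x, ‖F 0‖ + 2 * C * (1 + ‖x‖ ^ 4) ∂μ :=
        norm_integral_le_of_norm_le ((integrable_const _).add h2)
          (.of_forall (norm_le_of_norm_sub_le hC hF))
    _ = ‖F 0‖ + 2 * C * (1 + ∫ x, ‖x‖ ^ 4 ∂μ) := by
        rw [integral_add (integrable_const _) h2, integral_const_mul,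
          integral_add (integrable_const 1) h4]
        simp

end Growth

section SquareIntegrable

variable {Ω : Type*} [MeasurableSpace Ω] {μ : Measure Ω}

theorem integral_mul_le_sqrt_mul_sqrt {f g : Ω → ℝ} (hf0 : 0 ≤ᵐ[μ] f) (hg0 : 0 ≤ᵐ[μ] g)
    (hf : MemLp f 2 μ) (hg : MemLp g 2 μ) :
    ∫ ω, f ω * g ω ∂μ ≤ sqrt (∫ ω, f ω ^ 2 ∂μ) * sqrt (∫ ω, g ω ^ 2 ∂μ) := by
  have h := integral_mul_le_Lp_mul_Lq_of_nonneg Real.HolderConjugate.two_two hf0 hg0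
    (by simpa using hf) (by simpa using hg)
  simpa only [sqrt_eq_rpow, Real.rpow_two, one_div] using h

theorem memLp_two_one_add_sq_add_sq [IsFiniteMeasure μ] {u v : Ω → ℝ}
    (hu : AEStronglyMeasurable u μ) (hv : AEStronglyMeasurable v μ)
    (hu4 : Integrable (fun ω => u ω ^ 4) μ) (hv4 : Integrable (fun ω => v ω ^ 4) μ) :
    MemLp (fun ω => 1 + u ω ^ 2 + v ω ^ 2) 2 μ := by
  have hint : Integrable (fun ω => 3 * (1 + u ω ^ 4 + v ω ^ 4)) μ :=
    (((integrable_const 1).add hu4).add hv4).const_mul 3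
  refine (memLp_two_iff_integrable_sq (by fun_prop)).2 <| hint.mono' (by fun_prop) ?_
  refine .of_forall fun ω => ?_
  rw [Real.norm_of_nonneg (sq_nonneg _)]
  nlinarith [sq_nonneg (u ω ^ 2 - 1), sq_nonneg (v ω ^ 2 - 1), sq_nonneg (u ω ^ 2 - v ω ^ 2)]

theorem integral_one_add_sq_add_sq_sq_le [IsProbabilityMeasure μ] {u v : Ω → ℝ}
    (hu4 : Integrable (fun ω => u ω ^ 4) μ) (hv4 : Integrable (fun ω => v ω ^ 4) μ) :
    ∫ ω, (1 + u ω ^ 2 + v ω ^ 2) ^ 2 ∂μ ≤ 3 * (1 + ∫ ω, u ω ^ 4 ∂μ + ∫ ω, v ω ^ 4 ∂μ) := by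
  have hu4' : Integrable (fun ω => 1 + u ω ^ 4) μ := (integrable_const 1).add hu4
  have hint : Integrable (fun ω => 1 + u ω ^ 4 + v ω ^ 4) μ := hu4'.add hv4
  calc ∫ ω, (1 + u ω ^ 2 + v ω ^ 2) ^ 2 ∂μ ≤ ∫ ω, 3 * (1 + u ω ^ 4 + v ω ^ 4) ∂μ := by
        refine integral_mono_of_nonneg (.of_forall fun _ => sq_nonneg _) (hint.const_mul 3)
          (.of_forall fun ω => ?_)
        nlinarith [sq_nonneg (u ω ^ 2 - 1), sq_nonneg (v ω ^ 2 - 1),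
          sq_nonneg (u ω ^ 2 - v ω ^ 2)]
    _ = 3 * (1 + ∫ ω, u ω ^ 4 ∂μ + ∫ ω, v ω ^ 4 ∂μ) := by
        rw [integral_const_mul, integral_add hu4' hv4, integral_add (integrable_const 1) hu4]
        simp

end SquareIntegrable

section Coupling

variable {E G : Type*} [NormedAddCommGroup E] [MeasurableSpace E] [BorelSpace E]
  [SecondCountableTopology E] [NormedAddCommGroup G] [NormedSpace ℝ G]

theorem norm_integral_sub_integral_le_of_coupling {F : E → G} {C K : ℝ}
    {γ : Measure (E × E)} [IsProbabilityMeasure γ]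
    (hFc : Continuous F) (hC : 0 ≤ C)
    (hF : ∀ x y, ‖F x - F y‖ ≤ C * (1 + ‖x‖ ^ 2 + ‖y‖ ^ 2) * ‖x - y‖)
    (h₁ : Integrable (fun x => ‖x‖ ^ 4) (γ.map Prod.fst))
    (h₂ : Integrable (fun x => ‖x‖ ^ 4) (γ.map Prod.snd))
    (hK₁ : ∫ x, ‖x‖ ^ 4 ∂(γ.map Prod.fst) ≤ K) (hK₂ : ∫ x, ‖x‖ ^ 4 ∂(γ.map Prod.snd) ≤ K) :
    ‖∫ x, F x ∂(γ.map Prod.fst) - ∫ x, F x ∂(γ.map Prod.snd)‖ ≤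
      C * sqrt (3 * (1 + 2 * K)) * sqrt (∫ p, ‖p.1 - p.2‖ ^ 2 ∂γ) := by
  have hF₁ : Integrable (fun p : E × E => F p.1) γ :=
    (integrable_of_norm_sub_le hFc hC hF h₁).comp_measurable measurable_fst
  have hF₂ : Integrable (fun p : E × E => F p.2) γ :=
    (integrable_of_norm_sub_le hFc hC hF h₂).comp_measurable measurable_snd
  have hu4 : Integrable (fun p : E × E => ‖p.1‖ ^ 4) γ := h₁.comp_measurable measurable_fst
  have hv4 : Integrable (fun p : E × E => ‖p.2‖ ^ 4) γ := h₂.comp_measurable measurable_snd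
  rw [integral_map measurable_fst.aemeasurable (by fun_prop)] at hK₁
  rw [integral_map measurable_snd.aemeasurable (by fun_prop)] at hK₂
  set h : E × E → ℝ := fun p => 1 + ‖p.1‖ ^ 2 + ‖p.2‖ ^ 2
  have hh : MemLp h 2 γ := memLp_two_one_add_sq_add_sq (by fun_prop) (by fun_prop) hu4 hv4
  have hd : MemLp (fun p : E × E => ‖p.1 - p.2‖) 2 γ := by
    refine hh.of_le (by fun_prop) (.of_forall fun p => ?_)
    rw [norm_norm, Real.norm_of_nonneg (by positivity)]
    exact (norm_sub_le _ _).trans (add_le_one_add_sq_add_sq _ _)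
  have hh2 : ∫ p, h p ^ 2 ∂γ ≤ 3 * (1 + 2 * K) :=
    (integral_one_add_sq_add_sq_sq_le hu4 hv4).trans (by linarith)
  calc ‖∫ x, F x ∂(γ.map Prod.fst) - ∫ x, F x ∂(γ.map Prod.snd)‖
      = ‖∫ p, (F p.1 - F p.2) ∂γ‖ := by
        rw [integral_map measurable_fst.aemeasurable hFc.aestronglyMeasurable,
          integral_map measurable_snd.aemeasurable hFc.aestronglyMeasurable,
          integral_sub hF₁ hF₂]
    _ ≤ ∫ p, C * (h p * ‖p.1 - p.2‖) ∂γ :=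
        norm_integral_le_of_norm_le ((hh.integrable_mul hd).const_mul C)
          (.of_forall fun p => (hF p.1 p.2).trans_eq (mul_assoc _ _ _))
    _ = C * ∫ p, h p * ‖p.1 - p.2‖ ∂γ := integral_const_mul _ _
    _ ≤ C * (sqrt (∫ p, h p ^ 2 ∂γ) * sqrt (∫ p, ‖p.1 - p.2‖ ^ 2 ∂γ)) := by
        gcongr
        exact integral_mul_le_sqrt_mul_sqrt (.of_forall fun p => by positivity)
          (.of_forall fun p => norm_nonneg _) hh hd
    _ ≤ C * sqrt (3 * (1 + 2 * K)) * sqrt (∫ p, ‖p.1 - p.2‖ ^ 2 ∂γ) := by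
        rw [mul_assoc]; gcongr

end Coupling

theorem norm_inv_smul_sub_inv_smul_le {E : Type*} [NormedAddCommGroup E] [NormedSpace ℝ E]
    {A B a : ℝ} (ha : 0 < a) (hA : a ≤ A) (hB : a ≤ B) (P Q : E) :
    ‖A⁻¹ • P - B⁻¹ • Q‖ ≤ a⁻¹ * ‖P - Q‖ + a⁻¹ ^ 2 * ‖Q‖ * |A - B| := by
  have hA0 : 0 < A := ha.trans_le hA
  have hB0 : 0 < B := ha.trans_le hB
  have hinv : |A⁻¹ - B⁻¹| ≤ a⁻¹ ^ 2 * |A - B| := by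
    rw [inv_sub_inv hA0.ne' hB0.ne', abs_div, abs_sub_comm, abs_of_pos (mul_pos hA0 hB0),
      div_eq_mul_inv, mul_comm, mul_inv, sq]
    gcongr
  calc ‖A⁻¹ • P - B⁻¹ • Q‖ = ‖A⁻¹ • (P - Q) + (A⁻¹ - B⁻¹) • Q‖ := by
        rw [smul_sub, sub_smul, sub_add_sub_cancel]
    _ ≤ A⁻¹ * ‖P - Q‖ + |A⁻¹ - B⁻¹| * ‖Q‖ := by
        simpa only [norm_smul, Real.norm_eq_abs, abs_of_pos (inv_pos.2 hA0)] using
          norm_add_le (A⁻¹ • (P - Q)) ((A⁻¹ - B⁻¹) • Q)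
    _ ≤ a⁻¹ * ‖P - Q‖ + a⁻¹ ^ 2 * |A - B| * ‖Q‖ := by gcongr
    _ = a⁻¹ * ‖P - Q‖ + a⁻¹ ^ 2 * ‖Q‖ * |A - B| := by ring

section Wasserstein

variable {d : ℕ}

local notation "E" => EuclideanSpace ℝ (Fin d)

theorem W2_nonneg (μ ν : Measure E) : 0 ≤ W2 μ ν :=
  Real.sInf_nonneg (by rintro _ ⟨_, _, _, _, rfl⟩; positivity)

theorem le_mul_W2_of_forall_coupling {μ ν : Measure E} [IsProbabilityMeasure μ]
    [IsProbabilityMeasure ν] {x c : ℝ} (hc : 0 < c)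
    (h : ∀ γ : Measure (E × E), IsProbabilityMeasure γ → γ.map Prod.fst = μ →
      γ.map Prod.snd = ν → x ≤ c * sqrt (∫ p, ‖p.1 - p.2‖ ^ 2 ∂γ)) :
    x ≤ c * W2 μ ν := by
  rw [← div_le_iff₀' hc]
  refine le_csInf ⟨_, μ.prod ν, inferInstance, by simp, by simp, rfl⟩ ?_
  rintro _ ⟨γ, hγ, hfst, hsnd, rfl⟩
  rw [div_le_iff₀' hc, ← sqrt_eq_rpow]
  exact h γ hγ hfst hsnd

end Wasserstein

theorem consensusPoint_sub_le_mul_W2 {d : ℕ} {α K ML : ℝ}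
    {L : EuclideanSpace ℝ (Fin d) → ℝ} (hα : 0 ≤ α) (hK : 0 ≤ K)
    (hML : 0 ≤ ML) (hLc : Continuous L) (hbddBelow : BddBelow (range L))
    (hbddAbove : BddAbove (range L))
    (hLip : ∀ θ θ', |L θ - L θ'| ≤ ML * (‖θ‖ + ‖θ'‖) * ‖θ - θ'‖) :
    ∃ c > 0, ∀ μ μh : Measure (EuclideanSpace ℝ (Fin d)),
      IsProbabilityMeasure μ → IsProbabilityMeasure μh →
      Integrable (fun θ => ‖θ‖ ^ 4) μ → Integrable (fun θ => ‖θ‖ ^ 4) μh →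
      ∫ θ, ‖θ‖ ^ 4 ∂μ ≤ K → ∫ θ, ‖θ‖ ^ 4 ∂μh ≤ K →
      ‖consensusPoint α L μ - consensusPoint α L μh‖ ≤ c * W2 μ μh := by
  obtain ⟨a, ha, Cw, hCw, CP, hCP, hwa, hw, hwθ⟩ :=
    exists_consensusWeight_bounds hα hML hbddBelow hbddAbove hLip
  have hwc : Continuous fun θ => exp (-α * L θ) := by fun_prop
  set s := sqrt (3 * (1 + 2 * K))
  have hs : 0 < s := sqrt_pos.2 (by positivity)
  refine ⟨a⁻¹ * CP * s + a⁻¹ ^ 2 * (2 * CP * (1 + K)) * Cw * s, by positivity, ?_⟩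
  intro μ μh hμ hμh h4 h4h hK₁ hK₂
  refine le_mul_W2_of_forall_coupling (by positivity) fun γ hγ hfst hsnd => ?_
  subst hfst hsnd
  have hmass (ν : Measure (EuclideanSpace ℝ (Fin d))) [IsProbabilityMeasure ν]
      (h4 : Integrable (fun θ => ‖θ‖ ^ 4) ν) : a ≤ ∫ θ, exp (-α * L θ) ∂ν := by
    simpa using integral_mono (integrable_const a)
      (integrable_of_norm_sub_le hwc hCw hw h4) hwa
  have hQ : ‖∫ θ, exp (-α * L θ) • θ ∂(γ.map Prod.snd)‖ ≤ 2 * CP * (1 + K) := by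
    refine (norm_integral_le_of_norm_sub_le hCP.le hwθ h4h).trans ?_
    simp only [smul_zero, norm_zero, zero_add]
    gcongr
  have hPQ := norm_integral_sub_integral_le_of_coupling (by fun_prop) hCP.le hwθ h4 h4h hK₁ hK₂
  have hAB := norm_integral_sub_integral_le_of_coupling hwc hCw hw h4 h4h hK₁ hK₂
  rw [Real.norm_eq_abs] at hAB
  refine (norm_inv_smul_sub_inv_smul_le ha (hmass _ h4) (hmass _ h4h) _ _).trans ?_
  calc _ ≤ a⁻¹ * (CP * s * sqrt (∫ p, ‖p.1 - p.2‖ ^ 2 ∂γ))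
        + a⁻¹ ^ 2 * (2 * CP * (1 + K)) * (Cw * s * sqrt (∫ p, ‖p.1 - p.2‖ ^ 2 ∂γ)) := by
        gcongr
    _ = _ := by ring

/-- W₂-stability of the consensus points: under Assumption 1 and boundedness
from above of `L₁, L₂`, there is a constant `c₀ > 0` such that for all Borel probability
measures `μ, μ̂` with fourth moments at most `K` and `k = 1, 2`,
`|m_{L_k}^α[μ] - m_{L_k}^α[μ̂]| ≤ c₀ W₂(μ, μ̂)`. -/
theorem consensusPoint_W2_stability {d : ℕ} (α K : ℝ) (hα : 0 < α) (hK : 0 < K)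
    (L : Fin 2 → EuclideanSpace ℝ (Fin d) → ℝ)
    (ML CL MgL CgL : Fin 2 → ℝ)
    (hA : ∀ k, Assumption1 (L k) (ML k) (CL k) (MgL k) (CgL k))
    (hbddAbove : ∀ k, BddAbove (Set.range (L k))) :
    ∃ c₀ > 0, ∀ (μ μh : Measure (EuclideanSpace ℝ (Fin d))),
      IsProbabilityMeasure μ → IsProbabilityMeasure μh →
      Integrable (fun θ => ‖θ‖ ^ 4) μ → Integrable (fun θ => ‖θ‖ ^ 4) μh →
      (∫ θ, ‖θ‖ ^ 4 ∂μ) ≤ K → (∫ θ, ‖θ‖ ^ 4 ∂μh) ≤ K →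
      ∀ k : Fin 2,
        ‖consensusPoint α (L k) μ - consensusPoint α (L k) μh‖ ≤ c₀ * W2 μ μh := by
  choose c hc hstable using fun k => consensusPoint_sub_le_mul_W2 hα.le hK.le
    (hA k).ML_pos.le (hA k).differentiable.continuous (hA k).bddBelow (hbddAbove k)
    (hA k).locLip
  refine ⟨∑ k, c k, Finset.sum_pos (fun k _ => hc k) Finset.univ_nonempty, ?_⟩
  intro μ μh hμ hμh h4 h4h hK₁ hK₂ k
  calc ‖consensusPoint α (L k) μ - consensusPoint α (L k) μh‖ ≤ c k * W2 μ μh :=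
        hstable k μ μh hμ hμh h4 h4h hK₁ hK₂
    _ ≤ (∑ k, c k) * W2 μ μh := by
        gcongr
        · exact W2_nonneg μ μh
        · exact Finset.single_le_sum (fun k _ => (hc k).le) (Finset.mem_univ k)
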